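/- Let r ≥ 3, and let E and Ẽ be r-th order linear ODEs in rational form (that is, with coefficient of the (r−1)-st derivative identically zero) on open intervals I and T(I) respectively. Let T, X₁, X₀ : I → ℝ be smooth with T'(t)X₁(t) ≠ 0 for all t, and suppose the fiber-preserving transformation t̃ = T(t), x̃ = X₁(t)x + X₀(t) maps E to Ẽ. Then 2 X₁'(t) T'(t) = (r − 1) X₁(t) T''(t) for all t ∈ I; in particular, if T' > 0 on I then there is a nonzero constant C such that X₁(t) = C·(T'(t))^{(r−1)/2} on I. -/

import Mathlib

/-!
Fix `t₀ ∈ I`. The difference `z` of two solutions of `E` whose jets at `t₀` differ only in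
order `r - 1` solves the homogeneous equation, is flat to order `r - 1` at `t₀` (its derivatives
of order `< r - 1` vanish there) with `z⁽ʳ⁻¹⁾(t₀) = 1`, and by the rational form
`z⁽ʳ⁾(t₀) = -a_{r-1}(t₀) = 0`. The difference `w` of the transformed solutions solves the
homogeneous target equation and `w ∘ T = X₁ z`; as `T' ≠ 0`, `w` is flat to order `r - 1` at
`T t₀` too, so again `w⁽ʳ⁾(T t₀) = 0`. Comparing the derivatives of order `r - 1` and `r` of
`X₁ z` (Leibniz) and of `w ∘ T` (chain rule) at `t₀` gives `X₁ = T'^(r-1) w⁽ʳ⁻¹⁾` and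
`r X₁' = (r choose 2) T'^(r-2) T'' w⁽ʳ⁻¹⁾`, hence `2 X₁' T' = (r - 1) X₁ T''`. When `T' > 0` this
says that `X₁ T'^(-(r-1)/2)` has zero derivative.

Solutions with prescribed jets exist on all of `I` by the Picard–Lindelöf theorem for the
companion first-order system, which is linear and hence Lipschitz uniformly on compact
subintervals.
-/

open Set

/-- The left-hand side `x^(r)(t) + ∑_{i<r} aᵢ(t) x^(i)(t)` of an `r`-th order linear ODE. -/
noncomputable def odeLHS (r : ℕ) (a : ℕ → ℝ → ℝ) (x : ℝ → ℝ) (t : ℝ) : ℝ :=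
  iteratedDeriv r x t + ∑ i ∈ Finset.range r, a i t * iteratedDeriv i x t

/-- `x` is a solution on `I` of the linear ODE `x^(r) + ∑_{i<r} aᵢ x^(i) = b`:
it is smooth on `I` and satisfies the identity on `I`. -/
def IsSolODE (r : ℕ) (a : ℕ → ℝ → ℝ) (b : ℝ → ℝ) (I : Set ℝ) (x : ℝ → ℝ) : Prop :=
  ContDiffOn ℝ (⊤ : ℕ∞) x I ∧ ∀ t ∈ I, odeLHS r a x t = b t

/-- `I ⊆ ℝ` is a (nonempty) open interval. -/
def IsOpenInterval (I : Set ℝ) : Prop := IsOpen I ∧ I.OrdConnected ∧ I.Nonempty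

/-- The fiber-preserving transformation `t̃ = T(t)`, `x̃ = X₁(t)x + X₀(t)` maps the
`r`-th order linear ODE with coefficients `a`, `b` on `I` to the one with coefficients
`a'`, `b'` on `T(I)`: for every solution `x` of the source equation the function
`y(s) = X₁(T⁻¹(s))x(T⁻¹(s)) + X₀(T⁻¹(s))` is a solution of the target equation. -/
def FPMapsODE (r : ℕ) (I : Set ℝ) (a : ℕ → ℝ → ℝ) (b : ℝ → ℝ)
    (a' : ℕ → ℝ → ℝ) (b' : ℝ → ℝ) (T X₁ X₀ : ℝ → ℝ) : Prop :=
  ∀ x : ℝ → ℝ, IsSolODE r a b I x →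
    ∃ y : ℝ → ℝ, IsSolODE r a' b' (T '' I) y ∧ ∀ t ∈ I, y (T t) = X₁ t * x t + X₀ t

open scoped ContDiff

section SmoothOnOpen

variable {U : Set ℝ} {f : ℝ → ℝ} {x : ℝ}

theorem ContDiffOn.contDiffAt_of_isOpen (hf : ContDiffOn ℝ ∞ f U) (hU : IsOpen U) (hx : x ∈ U)
    (n : ℕ) : ContDiffAt ℝ n f x :=
  (hf.contDiffAt (hU.mem_nhds hx)).of_le (by exact_mod_cast le_top)

theorem ContDiffOn.hasDerivAt_of_isOpen (hf : ContDiffOn ℝ ∞ f U) (hU : IsOpen U) (hx : x ∈ U) :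
    HasDerivAt f (deriv f x) x :=
  ((hf.differentiableOn (by simp)).differentiableAt (hU.mem_nhds hx)).hasDerivAt

theorem ContDiffOn.iteratedDeriv_of_isOpen (hf : ContDiffOn ℝ ∞ f U) (hU : IsOpen U) (k : ℕ) :
    ContDiffOn ℝ ∞ (iteratedDeriv k f) U := by
  induction k with
  | zero => simpa using hf
  | succ k ih => simpa only [iteratedDeriv_succ] using ih.deriv_of_isOpen hU le_rfl

theorem ContDiffOn.hasDerivAt_iteratedDeriv (hf : ContDiffOn ℝ ∞ f U) (hU : IsOpen U) (k : ℕ)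
    (hx : x ∈ U) : HasDerivAt (iteratedDeriv k f) (iteratedDeriv (k + 1) f x) x := by
  simpa only [iteratedDeriv_succ] using (hf.iteratedDeriv_of_isOpen hU k).hasDerivAt_of_isOpen hU hx

end SmoothOnOpen

section Picard

open Function MeasureTheory intervalIntegral
open scoped NNReal Nat Interval

variable {E : Type*} [NormedAddCommGroup E] {F : ℝ → E → E} {c d t₀ : ℝ} {K : ℝ≥0}

theorem continuous_IccExtend_apply (hF : ContinuousOn (uncurry F) (Icc c d ×ˢ univ))
    (hcd : c ≤ d) (g : C(Icc c d, E)) :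
    Continuous (IccExtend hcd fun τ : Icc c d => F τ (g τ)) :=
  (hF.comp_continuous (continuous_subtype_val.prodMk g.continuous)
    fun τ => ⟨τ.2, mem_univ _⟩).Icc_extend'

variable [NormedSpace ℝ E]

theorem norm_integral_le_of_norm_le_mul_pow_abs_sub {f : ℝ → E} {C t : ℝ} {n : ℕ}
    (h : ∀ s ∈ Ι t₀ t, ‖f s‖ ≤ C * |s - t₀| ^ n) :
    ‖∫ s in t₀..t, f s‖ ≤ C * (|t - t₀| ^ (n + 1) / (n + 1)) := by
  rw [norm_intervalIntegral_eq, ← integral_pow_abs_sub_uIoc, ← MeasureTheory.integral_const_mul]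
  refine norm_integral_le_of_norm_le (Continuous.integrableOn_uIoc (by fun_prop)) ?_
  filter_upwards [ae_restrict_mem measurableSet_uIoc] with s hs using h s hs

noncomputable def picardIcc (hF : ContinuousOn (uncurry F) (Icc c d ×ˢ univ)) (hcd : c ≤ d)
    (t₀ : ℝ) (v₀ : E) (g : C(Icc c d, E)) : C(Icc c d, E) where
  toFun t := v₀ + ∫ s in t₀..t, IccExtend hcd (fun τ : Icc c d => F τ (g τ)) s
  continuous_toFun := continuous_const.add <| (continuous_primitive
    (fun _ _ => (continuous_IccExtend_apply hF hcd g).intervalIntegrable _ _) t₀).comp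
      continuous_subtype_val

theorem picardIcc_apply (hF : ContinuousOn (uncurry F) (Icc c d ×ˢ univ)) (hcd : c ≤ d)
    (v₀ : E) (g : C(Icc c d, E)) (t : Icc c d) : picardIcc hF hcd t₀ v₀ g t =
      v₀ + ∫ s in t₀..t, IccExtend hcd (fun τ : Icc c d => F τ (g τ)) s := rfl

theorem dist_iterate_picardIcc_apply_le (hF : ContinuousOn (uncurry F) (Icc c d ×ˢ univ))
    (hK : ∀ t ∈ Icc c d, LipschitzWith K (F t)) (hcd : c ≤ d) (ht₀ : t₀ ∈ Icc c d) (v₀ : E)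
    (g h : C(Icc c d, E)) (n : ℕ) (t : Icc c d) :
    dist ((picardIcc hF hcd t₀ v₀)^[n] g t) ((picardIcc hF hcd t₀ v₀)^[n] h t) ≤
      (K * |(t : ℝ) - t₀|) ^ n / n ! * dist g h := by
  induction n generalizing t with
  | zero => simpa using ContinuousMap.dist_apply_le_dist t
  | succ n ih =>
    rw [iterate_succ_apply', iterate_succ_apply', dist_eq_norm, picardIcc_apply,
      picardIcc_apply, add_sub_add_left_eq_sub, ← integral_sub
        ((continuous_IccExtend_apply hF hcd _).intervalIntegrable _ _)
        ((continuous_IccExtend_apply hF hcd _).intervalIntegrable _ _)]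
    calc _ ≤ (K ^ (n + 1) / n ! * dist g h) * (|(t : ℝ) - t₀| ^ (n + 1) / (n + 1)) := by
          refine norm_integral_le_of_norm_le_mul_pow_abs_sub fun s hs => ?_
          have hs' : s ∈ Icc c d := (uIoc_subset_uIcc.trans (uIcc_subset_Icc ht₀ t.2)) hs
          rw [IccExtend_of_mem _ _ hs', IccExtend_of_mem _ _ hs', ← dist_eq_norm]
          calc _ ≤ K * ((K * |s - t₀|) ^ n / n ! * dist g h) :=
                ((hK s hs').dist_le_mul _ _).trans (by gcongr; exact ih ⟨s, hs'⟩)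
            _ = _ := by rw [mul_pow]; ring
      _ = _ := by
          rw [Nat.factorial_succ]
          push_cast
          field_simp
          ring

theorem exists_isFixedPt_picardIcc [CompleteSpace E]
    (hF : ContinuousOn (uncurry F) (Icc c d ×ˢ univ))
    (hK : ∀ t ∈ Icc c d, LipschitzWith K (F t)) (hcd : c ≤ d) (ht₀ : t₀ ∈ Icc c d) (v₀ : E) :
    ∃ g, IsFixedPt (picardIcc hF hcd t₀ v₀) g := by
  -- `(K (d - c))ⁿ / n! → 0`, so some iterate of the Picard operator is a contraction.
  obtain ⟨n, hn⟩ := (FloorSemiring.tendsto_pow_div_factorial_atTop (K * (d - c))).eventually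
    (gt_mem_nhds zero_lt_one) |>.exists
  have hnonneg : 0 ≤ (K * (d - c)) ^ n / n ! := by
    have : 0 ≤ d - c := sub_nonneg.2 hcd
    positivity
  have hlip : LipschitzWith ⟨_, hnonneg⟩ (picardIcc hF hcd t₀ v₀)^[n] :=
    LipschitzWith.of_dist_le_mul fun g h => (ContinuousMap.dist_le (by positivity)).2 fun t =>
      (dist_iterate_picardIcc_apply_le hF hK hcd ht₀ v₀ g h n t).trans <| by
        have : |(t : ℝ) - t₀| ≤ d - c := abs_sub_le_iff.2 ⟨by linarith [t.2.2, ht₀.1],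
          by linarith [t.2.1, ht₀.2]⟩
        show _ ≤ (K * (d - c)) ^ n / (n ! : ℝ) * dist g h
        gcongr
  exact ⟨_, ContractingWith.isFixedPt_fixedPoint_iterate ⟨hn, hlip⟩⟩

theorem exists_hasDerivAt_Icc_of_lipschitzWith [CompleteSpace E]
    (hF : ContinuousOn (uncurry F) (Icc c d ×ˢ univ))
    (hK : ∀ t ∈ Icc c d, LipschitzWith K (F t)) (ht₀ : t₀ ∈ Icc c d) (v₀ : E) :
    ∃ v : ℝ → E, v t₀ = v₀ ∧ ∀ t ∈ Icc c d, HasDerivAt v (F t (v t)) t := by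
  have hcd : c ≤ d := ht₀.1.trans ht₀.2
  obtain ⟨g, hg⟩ := exists_isFixedPt_picardIcc hF hK hcd ht₀ v₀
  refine ⟨fun t => v₀ + ∫ s in t₀..t, IccExtend hcd (fun τ : Icc c d => F τ (g τ)) s,
    by simp, fun t ht => ?_⟩
  have hgt : g ⟨t, ht⟩ = v₀ + ∫ s in t₀..t, IccExtend hcd (fun τ : Icc c d => F τ (g τ)) s := by
    rw [← picardIcc_apply hF hcd v₀ g ⟨t, ht⟩, hg]
  have h := ((continuous_IccExtend_apply hF hcd g).integral_hasStrictDerivAt t₀ t).hasDerivAt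
  rw [IccExtend_of_mem _ _ ht, hgt] at h
  exact h.const_add v₀

end Picard

theorem IsOpen.exists_Icc_subset_and_mem_Ioo {I : Set ℝ} (hI : IsOpen I) (hIc : I.OrdConnected)
    {s t : ℝ} (hs : s ∈ I) (ht : t ∈ I) : ∃ c d, Icc c d ⊆ I ∧ s ∈ Ioo c d ∧ t ∈ Ioo c d := by
  obtain ⟨c, hcI, hc⟩ : ∃ c ∈ I, c < min s t :=
    ((eventually_nhdsWithin_of_eventually_nhds (hI.eventually_mem (min_rec' (· ∈ I) hs ht))).and
      (eventually_mem_nhdsWithin (s := Iio _))).exists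
  obtain ⟨d, hdI, hd⟩ : ∃ d ∈ I, max s t < d :=
    ((eventually_nhdsWithin_of_eventually_nhds (hI.eventually_mem (max_rec' (· ∈ I) hs ht))).and
      (eventually_mem_nhdsWithin (s := Ioi _))).exists
  exact ⟨c, d, hIc.out hcI hdI, ⟨(lt_min_iff.1 hc).1, (max_lt_iff.1 hd).1⟩,
    ⟨(lt_min_iff.1 hc).2, (max_lt_iff.1 hd).2⟩⟩

section Global

open Function Filter Topology

variable {E : Type*} [NormedAddCommGroup E] [NormedSpace ℝ E]
  {F : ℝ → E → E} {I : Set ℝ} {t₀ : ℝ}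

theorem eqOn_Icc_inter_of_hasDerivAt {c₁ d₁ c₂ d₂ : ℝ} {K : NNReal} {u₁ u₂ : ℝ → E}
    (hK : ∀ t ∈ Icc c₁ d₁, LipschitzWith K (F t))
    (hu₁ : ∀ t ∈ Icc c₁ d₁, HasDerivAt u₁ (F t (u₁ t)) t)
    (hu₂ : ∀ t ∈ Icc c₂ d₂, HasDerivAt u₂ (F t (u₂ t)) t)
    (ht₁ : t₀ ∈ Ioo c₁ d₁) (ht₂ : t₀ ∈ Ioo c₂ d₂) (h₀ : u₁ t₀ = u₂ t₀) :
    EqOn u₁ u₂ (Icc c₁ d₁ ∩ Icc c₂ d₂) := by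
  rw [Icc_inter_Icc]
  have h₁ : Icc (max c₁ c₂) (min d₁ d₂) ⊆ Icc c₁ d₁ :=
    Icc_subset_Icc (le_max_left _ _) (min_le_left _ _)
  have h₂ : Icc (max c₁ c₂) (min d₁ d₂) ⊆ Icc c₂ d₂ :=
    Icc_subset_Icc (le_max_right _ _) (min_le_right _ _)
  exact ODE_solution_unique_of_mem_Icc (s := fun _ => univ)
    (fun t ht => (hK t (h₁ (Ioo_subset_Icc_self ht))).lipschitzOnWith)
    ⟨max_lt ht₁.1 ht₂.1, lt_min ht₁.2 ht₂.2⟩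
    (HasDerivAt.continuousOn fun t ht => hu₁ t (h₁ ht))
    (fun t ht => hu₁ t (h₁ (Ioo_subset_Icc_self ht))) (fun _ _ => mem_univ _)
    (HasDerivAt.continuousOn fun t ht => hu₂ t (h₂ ht))
    (fun t ht => hu₂ t (h₂ (Ioo_subset_Icc_self ht))) (fun _ _ => mem_univ _) h₀

theorem exists_forall_hasDerivAt_of_lipschitzWith_Icc [CompleteSpace E] (hI : IsOpen I)
    (hIc : I.OrdConnected) (hF : ContinuousOn (uncurry F) (I ×ˢ univ))
    (hK : ∀ c d, Icc c d ⊆ I → ∃ K, ∀ t ∈ Icc c d, LipschitzWith K (F t)) (ht₀ : t₀ ∈ I)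
    (v₀ : E) : ∃ v : ℝ → E, v t₀ = v₀ ∧ ∀ t ∈ I, HasDerivAt v (F t (v t)) t := by
  choose! c d hsub hmem hmem₀ using
    fun t (ht : t ∈ I) => hI.exists_Icc_subset_and_mem_Ioo hIc ht ht₀
  have hsol (t : ℝ) (ht : t ∈ I) :
      ∃ u : ℝ → E, u t₀ = v₀ ∧ ∀ s ∈ Icc (c t) (d t), HasDerivAt u (F s (u s)) s := by
    obtain ⟨K, hK⟩ := hK _ _ (hsub t ht)
    exact exists_hasDerivAt_Icc_of_lipschitzWith (hF.mono (prod_mono (hsub t ht) subset_rfl))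
      hK (Ioo_subset_Icc_self (hmem₀ t ht)) v₀
  choose! u hu₀ hu using hsol
  -- By uniqueness, the solutions on the different boxes agree on overlaps.
  have hagree (s : ℝ) (hs : s ∈ I) (t : ℝ) (ht : t ∈ I) (hst : s ∈ Icc (c t) (d t)) :
      u s s = u t s := by
    obtain ⟨K, hK⟩ := hK _ _ (hsub s hs)
    exact eqOn_Icc_inter_of_hasDerivAt hK (hu s hs) (hu t ht) (hmem₀ s hs) (hmem₀ t ht)
      ((hu₀ s hs).trans (hu₀ t ht).symm) ⟨Ioo_subset_Icc_self (hmem s hs), hst⟩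
  refine ⟨fun s => u s s, hu₀ t₀ ht₀, fun t ht => ?_⟩
  have hev : (fun s => u s s) =ᶠ[𝓝 t] u t :=
    eventually_of_mem (Ioo_mem_nhds (hmem t ht).1 (hmem t ht).2) fun s hs =>
      hagree s (hsub t ht (Ioo_subset_Icc_self hs)) t ht (Ioo_subset_Icc_self hs)
  exact (hu t ht t (Ioo_subset_Icc_self (hmem t ht))).congr_of_eventuallyEq hev

end Global

section LinearSystem

open Function

variable {E : Type*} [NormedAddCommGroup E] [NormedSpace ℝ E] {I : Set ℝ}
  {A : ℝ → E →L[ℝ] E} {β : ℝ → E}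

theorem exists_forall_hasDerivAt_linear [CompleteSpace E] (hI : IsOpen I) (hIc : I.OrdConnected)
    (hA : ContinuousOn A I) (hβ : ContinuousOn β I) {t₀ : ℝ} (ht₀ : t₀ ∈ I) (v₀ : E) :
    ∃ v : ℝ → E, v t₀ = v₀ ∧ ∀ t ∈ I, HasDerivAt v (A t (v t) + β t) t := by
  refine exists_forall_hasDerivAt_of_lipschitzWith_Icc (F := fun t v => A t v + β t) hI hIc
    (((hA.comp continuousOn_fst mapsTo_fst_prod).clm_apply continuousOn_snd).add
      (hβ.comp continuousOn_fst mapsTo_fst_prod)) (fun c d hcd => ?_) ht₀ v₀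
  obtain ⟨C, hC⟩ := isCompact_Icc.exists_bound_of_continuousOn (hA.mono hcd)
  refine ⟨C.toNNReal, fun t ht => LipschitzWith.of_dist_le_mul fun v w => ?_⟩
  calc dist (A t v + β t) (A t w + β t) = ‖A t (v - w)‖ := by
        rw [dist_add_right, dist_eq_norm, map_sub]
    _ ≤ ‖A t‖ * ‖v - w‖ := (A t).le_opNorm _
    _ ≤ C.toNNReal * dist v w := by
        rw [dist_eq_norm]
        gcongr
        exact (hC t ht).trans (Real.le_coe_toNNReal C)

theorem contDiffOn_of_hasDerivAt_linear (hI : IsOpen I) (hA : ContDiffOn ℝ ∞ A I)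
    (hβ : ContDiffOn ℝ ∞ β I) {v : ℝ → E} (hv : ∀ t ∈ I, HasDerivAt v (A t (v t) + β t) t) :
    ContDiffOn ℝ ∞ v I := by
  refine contDiffOn_infty.2 fun n => ?_
  induction n with
  | zero => exact contDiffOn_zero.2 (HasDerivAt.continuousOn hv)
  | succ n ih =>
    rw [Nat.cast_succ, contDiffOn_succ_iff_deriv_of_isOpen hI]
    refine
      ⟨fun t ht => (hv t ht).differentiableAt.differentiableWithinAt, fun h => by simp at h, ?_⟩
    exact (((hA.of_le (by exact_mod_cast le_top)).clm_apply ih).add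
      (hβ.of_le (by exact_mod_cast le_top))).congr fun t ht => (hv t ht).deriv

end LinearSystem

section ScalarLinearODE

variable {r : ℕ} {I : Set ℝ} {a : ℕ → ℝ → ℝ} {b : ℝ → ℝ}

noncomputable def companionCLM (r : ℕ) (a : ℕ → ℝ → ℝ) (t : ℝ) :
    (Fin r → ℝ) →L[ℝ] (Fin r → ℝ) :=
  ContinuousLinearMap.pi fun i => if h : (i : ℕ) + 1 < r then ContinuousLinearMap.proj ⟨i + 1, h⟩
    else -∑ j : Fin r, a j t • ContinuousLinearMap.proj j

theorem companionCLM_apply (t : ℝ) (v : Fin r → ℝ) (i : Fin r) :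
    companionCLM r a t v i =
      if h : (i : ℕ) + 1 < r then v ⟨i + 1, h⟩ else -∑ j : Fin r, a j t * v j := by
  by_cases h : (i : ℕ) + 1 < r <;> simp [companionCLM, h]

theorem contDiffOn_companionCLM (ha : ∀ i, ContDiffOn ℝ ∞ (a i) I) :
    ContDiffOn ℝ ∞ (companionCLM r a) I := by
  refine contDiffOn_clm_apply.2 fun v => contDiffOn_pi.2 fun i => ?_
  simp only [companionCLM_apply]
  split_ifs
  · exact contDiffOn_const
  · exact (ContDiffOn.sum fun (j : Fin r) _ => (ha j).mul contDiffOn_const).neg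

theorem iteratedDeriv_apply_zero_eqOn_apply (hI : IsOpen I) (hr : 0 < r) {v : ℝ → Fin r → ℝ}
    (hv : ∀ t ∈ I, ∀ (i : ℕ) (h : i + 1 < r),
      HasDerivAt (fun s => v s ⟨i, by omega⟩) (v t ⟨i + 1, h⟩) t) (i : ℕ) (h : i < r) :
    EqOn (iteratedDeriv i fun s => v s ⟨0, hr⟩) (fun s => v s ⟨i, h⟩) I := by
  induction i with
  | zero => intro t _; simp
  | succ i ih =>
    intro t ht
    rw [iteratedDeriv_succ, (ih (by omega)).eventuallyEq_of_mem (hI.mem_nhds ht) |>.deriv_eq]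
    exact (hv t ht i h).deriv

theorem exists_isSolODE_iteratedDeriv_eq
    (hr : 0 < r) (hI : IsOpen I) (hIc : I.OrdConnected) (ha : ∀ i, ContDiffOn ℝ ∞ (a i) I)
    (hb : ContDiffOn ℝ ∞ b I) {t₀ : ℝ} (ht₀ : t₀ ∈ I) (w : Fin r → ℝ) :
    ∃ x : ℝ → ℝ, IsSolODE r a b I x ∧ ∀ i : Fin r, iteratedDeriv i x t₀ = w i := by
  set β : ℝ → Fin r → ℝ := fun t i => if (i : ℕ) + 1 < r then 0 else b t
  have hβ : ContDiffOn ℝ ∞ β I := contDiffOn_pi.2 fun i => by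
    by_cases h : (i : ℕ) + 1 < r <;> simp [β, h, hb, contDiffOn_const]
  have hA := contDiffOn_companionCLM (r := r) ha
  obtain ⟨v, hv₀, hv⟩ :=
    exists_forall_hasDerivAt_linear hI hIc hA.continuousOn hβ.continuousOn ht₀ w
  have hcomp (t : ℝ) (ht : t ∈ I) (i : Fin r) : HasDerivAt (fun s => v s i)
      (if h : (i : ℕ) + 1 < r then v t ⟨i + 1, h⟩ else b t - ∑ j : Fin r, a j t * v t j) t := by
    refine (hasDerivAt_pi.1 (hv t ht) i).congr_deriv ?_
    by_cases h : (i : ℕ) + 1 < r <;> simp [companionCLM_apply, β, h, sub_eq_neg_add]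
  have hiter := iteratedDeriv_apply_zero_eqOn_apply hI hr
    fun t ht i h => by simpa [h] using hcomp t ht ⟨i, by omega⟩
  refine ⟨fun s => v s ⟨0, hr⟩, ⟨?_, fun t ht => ?_⟩,
    fun i => (hiter i i.2 ht₀).trans (by simp [hv₀])⟩
  · exact contDiffOn_pi.1 (contDiffOn_of_hasDerivAt_linear hI hA hβ hv) _
  · obtain ⟨q, rfl⟩ : ∃ q, r = q + 1 := ⟨r - 1, by omega⟩
    rw [odeLHS, iteratedDeriv_succ,
      ((hiter q (by omega)).eventuallyEq_of_mem (hI.mem_nhds ht)).deriv_eq,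
      (hcomp t ht ⟨q, by omega⟩).deriv, dif_neg (by simp), Finset.sum_range (fun i => a i t * _)]
    have hsum : ∑ i : Fin (q + 1), a i t * iteratedDeriv i (fun s => v s ⟨0, hr⟩) t =
        ∑ j : Fin (q + 1), a j t * v t j :=
      Finset.sum_congr rfl fun j _ => by rw [hiter j j.2 ht]
    rw [hsum, sub_add_cancel]

theorem exists_isSolODE_sub_flat (hr : 0 < r) (hI : IsOpen I) (hIc : I.OrdConnected)
    (ha : ∀ i, ContDiffOn ℝ ∞ (a i) I) (hb : ContDiffOn ℝ ∞ b I) {t : ℝ} (ht : t ∈ I) :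
    ∃ x₁ x₂ : ℝ → ℝ, IsSolODE r a b I x₁ ∧ IsSolODE r a b I x₂ ∧
      (∀ k < r - 1, iteratedDeriv k (x₁ - x₂) t = 0) ∧ iteratedDeriv (r - 1) (x₁ - x₂) t = 1 := by
  obtain ⟨x₁, hx₁, hjet₁⟩ :=
    exists_isSolODE_iteratedDeriv_eq hr hI hIc ha hb ht (Pi.single ⟨r - 1, by omega⟩ 1)
  obtain ⟨x₂, hx₂, hjet₂⟩ := exists_isSolODE_iteratedDeriv_eq hr hI hIc ha hb ht 0
  have hjet (k : ℕ) (hk : k < r) :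
      iteratedDeriv k (x₁ - x₂) t = if k = r - 1 then 1 else 0 := by
    rw [iteratedDeriv_sub (hx₁.1.contDiffAt_of_isOpen hI ht k)
      (hx₂.1.contDiffAt_of_isOpen hI ht k), hjet₁ ⟨k, hk⟩, hjet₂ ⟨k, hk⟩]
    simp [Pi.single_apply, Fin.ext_iff]
  exact ⟨x₁, x₂, hx₁, hx₂, fun k hk => by simp [hjet k (by omega), hk.ne],
    by simp [hjet (r - 1) (by omega)]⟩

theorem IsSolODE.sub {x₁ x₂ : ℝ → ℝ} (hI : IsOpen I) (h₁ : IsSolODE r a b I x₁)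
    (h₂ : IsSolODE r a b I x₂) : IsSolODE r a 0 I (x₁ - x₂) := by
  refine ⟨h₁.1.sub h₂.1, fun t ht => ?_⟩
  have hsub (n : ℕ) : iteratedDeriv n (x₁ - x₂) t = iteratedDeriv n x₁ t - iteratedDeriv n x₂ t :=
    iteratedDeriv_sub (h₁.1.contDiffAt_of_isOpen hI ht n) (h₂.1.contDiffAt_of_isOpen hI ht n)
  have e₁ := h₁.2 t ht
  have e₂ := h₂.2 t ht
  simp only [odeLHS, hsub, mul_sub, Finset.sum_sub_distrib, Pi.zero_apply] at e₁ e₂ ⊢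
  linarith

theorem IsSolODE.iteratedDeriv_eq_zero_of_flat {z : ℝ → ℝ} {t : ℝ} (hz : IsSolODE r a 0 I z)
    (ht : t ∈ I) (hrat : a (r - 1) t = 0) (hflat : ∀ k < r - 1, iteratedDeriv k z t = 0) :
    iteratedDeriv r z t = 0 := by
  have h := hz.2 t ht
  cases r with
  | zero => simpa [odeLHS] using h
  | succ q =>
    simp only [Nat.add_sub_cancel] at hrat hflat
    rw [odeLHS, Finset.sum_range_succ, hrat,
      Finset.sum_eq_zero fun k hk => by rw [hflat k (Finset.mem_range.1 hk), mul_zero]] at h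
    simpa using h

end ScalarLinearODE

noncomputable def chainCoeff (T : ℝ → ℝ) : ℕ → ℕ → ℝ → ℝ
  | 0, 0 => fun _ => 1
  | 0, _ + 1 => fun _ => 0
  | n + 1, 0 => deriv (chainCoeff T n 0)
  | n + 1, k + 1 => fun t => deriv (chainCoeff T n (k + 1)) t + deriv T t * chainCoeff T n k t

namespace chainCoeff

variable {T : ℝ → ℝ}

theorem eq_zero_of_lt : ∀ {n k : ℕ}, n < k → chainCoeff T n k = 0
  | 0, _ + 1, _ => rfl
  | n + 1, k + 1, h => by
    funext t
    simp [chainCoeff, eq_zero_of_lt (show n < k + 1 by omega), eq_zero_of_lt (show n < k by omega)]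

theorem succ_succ (n k : ℕ) (t : ℝ) : chainCoeff T (n + 1) (k + 1) t =
    deriv (chainCoeff T n (k + 1)) t + deriv T t * chainCoeff T n k t := rfl

theorem self (n : ℕ) : chainCoeff T n n = fun t => deriv T t ^ n := by
  induction n with
  | zero => rfl
  | succ n ih =>
    funext t
    simp [chainCoeff, eq_zero_of_lt (Nat.lt_succ_self n), ih, pow_succ']

theorem two_mul_succ_self_mul_deriv {t : ℝ} (hT : DifferentiableAt ℝ (deriv T) t) (n : ℕ) :
    2 * chainCoeff T (n + 1) n t * deriv T t =
      (n + 1) * n * deriv T t ^ n * iteratedDeriv 2 T t := by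
  rw [iteratedDeriv_succ, iteratedDeriv_one]
  induction n with
  | zero => simp [chainCoeff]
  | succ n ih =>
    have hpow : deriv (fun s => deriv T s ^ (n + 1)) t =
        (n + 1) * deriv T t ^ n * deriv (deriv T) t := by
      rw [(hT.hasDerivAt.fun_pow (n + 1)).deriv]
      push_cast
      ring
    rw [succ_succ, self, hpow]
    push_cast
    linear_combination deriv T t * ih

theorem contDiffOn {I : Set ℝ} (hI : IsOpen I) (hT : ContDiffOn ℝ ∞ T I) :
    ∀ n k, ContDiffOn ℝ ∞ (chainCoeff T n k) I
  | 0, 0 => contDiffOn_const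
  | 0, _ + 1 => contDiffOn_const
  | n + 1, 0 => (contDiffOn hI hT n 0).deriv_of_isOpen hI le_rfl
  | n + 1, k + 1 => ((contDiffOn hI hT n (k + 1)).deriv_of_isOpen hI le_rfl).add
      ((hT.deriv_of_isOpen hI le_rfl).mul (contDiffOn hI hT n k))

end chainCoeff

theorem iteratedDeriv_comp_eq_sum_chainCoeff {I V : Set ℝ} (hI : IsOpen I) (hV : IsOpen V)
    {T w : ℝ → ℝ} (hT : ContDiffOn ℝ ∞ T I) (hTV : MapsTo T I V) (hw : ContDiffOn ℝ ∞ w V)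
    (n : ℕ) {t : ℝ} (ht : t ∈ I) :
    iteratedDeriv n (w ∘ T) t =
      ∑ k ∈ Finset.range (n + 1), chainCoeff T n k t * iteratedDeriv k w (T t) := by
  induction n generalizing t with
  | zero => simp [chainCoeff]
  | succ n ih =>
    have hterm : ∀ k ∈ Finset.range (n + 1),
        HasDerivAt (fun s => chainCoeff T n k s * iteratedDeriv k w (T s))
          (deriv (chainCoeff T n k) t * iteratedDeriv k w (T t) +
            deriv T t * chainCoeff T n k t * iteratedDeriv (k + 1) w (T t)) t := fun k _ => by
      refine (((chainCoeff.contDiffOn hI hT n k).hasDerivAt_of_isOpen hI ht).mul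
        ((hw.hasDerivAt_iteratedDeriv hV k (hTV ht)).comp t
          (hT.hasDerivAt_of_isOpen hI ht))).congr_deriv ?_
      simp only [Function.comp_apply]
      ring
    rw [iteratedDeriv_succ, ((Set.EqOn.eventuallyEq_of_mem (fun s hs => ih hs)
      (hI.mem_nhds ht)).deriv_eq), (HasDerivAt.fun_sum hterm).deriv]
    have hzero : deriv (chainCoeff T n (n + 1)) t = 0 := by
      simp [chainCoeff.eq_zero_of_lt (Nat.lt_succ_self n)]
    rw [Finset.sum_range_succ' _ (n + 1), Finset.sum_add_distrib,
      Finset.sum_range_succ' (fun k => deriv (chainCoeff T n k) t * iteratedDeriv k w (T t))]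
    simp only [chainCoeff.succ_succ, add_mul, Finset.sum_add_distrib, Finset.sum_range_succ _ n,
      hzero]
    simp only [chainCoeff]
    ring

section Flat

variable {I V : Set ℝ} {T w : ℝ → ℝ} {t : ℝ}

theorem iteratedDeriv_comp_of_flat (hI : IsOpen I) (hV : IsOpen V) (hT : ContDiffOn ℝ ∞ T I)
    (hTV : MapsTo T I V) (hw : ContDiffOn ℝ ∞ w V) (ht : t ∈ I) {n : ℕ}
    (hflat : ∀ k < n, iteratedDeriv k w (T t) = 0) :
    iteratedDeriv n (w ∘ T) t = deriv T t ^ n * iteratedDeriv n w (T t) := by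
  rw [iteratedDeriv_comp_eq_sum_chainCoeff hI hV hT hTV hw n ht, Finset.sum_range_succ,
    Finset.sum_eq_zero fun k hk => by rw [hflat k (Finset.mem_range.1 hk), mul_zero],
    chainCoeff.self, zero_add]

theorem iteratedDeriv_succ_comp_of_flat (hI : IsOpen I) (hV : IsOpen V)
    (hT : ContDiffOn ℝ ∞ T I) (hTV : MapsTo T I V) (hw : ContDiffOn ℝ ∞ w V) (ht : t ∈ I)
    {n : ℕ} (hflat : ∀ k < n, iteratedDeriv k w (T t) = 0) :
    iteratedDeriv (n + 1) (w ∘ T) t = chainCoeff T (n + 1) n t * iteratedDeriv n w (T t) +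
      deriv T t ^ (n + 1) * iteratedDeriv (n + 1) w (T t) := by
  rw [iteratedDeriv_comp_eq_sum_chainCoeff hI hV hT hTV hw (n + 1) ht, Finset.sum_range_succ,
    Finset.sum_range_succ,
    Finset.sum_eq_zero fun k hk => by rw [hflat k (Finset.mem_range.1 hk), mul_zero],
    chainCoeff.self, zero_add]

theorem iteratedDeriv_flat_of_comp_flat (hI : IsOpen I) (hV : IsOpen V)
    (hT : ContDiffOn ℝ ∞ T I) (hTV : MapsTo T I V) (hw : ContDiffOn ℝ ∞ w V) (ht : t ∈ I)
    (hT' : deriv T t ≠ 0) {m : ℕ} (hflat : ∀ k < m, iteratedDeriv k (w ∘ T) t = 0) :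
    ∀ k < m, iteratedDeriv k w (T t) = 0 := by
  induction m with
  | zero => simp
  | succ m ih =>
    intro k hk
    obtain hk | rfl := Nat.lt_succ_iff_lt_or_eq.1 hk
    · exact ih (fun k hk => hflat k (by omega)) k hk
    · have h := hflat k (Nat.lt_succ_self k)
      rw [iteratedDeriv_comp_of_flat hI hV hT hTV hw ht (ih fun j hj => hflat j (by omega))] at h
      exact (mul_eq_zero.1 h).resolve_left (pow_ne_zero _ hT')

theorem iteratedDeriv_mul_of_flat {X z : ℝ → ℝ} {n m : ℕ} (hX : ContDiffAt ℝ n X t)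
    (hz : ContDiffAt ℝ n z t) (hflat : ∀ k < m, iteratedDeriv k z t = 0) :
    iteratedDeriv n (fun s => X s * z s) t = ∑ i ∈ Finset.range (n + 1 - m),
      n.choose i * iteratedDeriv i X t * iteratedDeriv (n - i) z t := by
  rw [iteratedDeriv_fun_mul hX hz]
  refine (Finset.sum_subset (Finset.range_subset_range.2 (Nat.sub_le _ _)) ?_).symm
  intro i hi hi'
  simp only [Finset.mem_range] at hi hi'
  rw [hflat (n - i) (by omega), mul_zero]

end Flat

theorem iteratedDeriv_flat_of_comp_eq_mul {I V : Set ℝ} {T X z w : ℝ → ℝ} {t : ℝ}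
    (hI : IsOpen I) (hV : IsOpen V) (hT : ContDiffOn ℝ ∞ T I) (hTV : MapsTo T I V)
    (hX : ContDiffOn ℝ ∞ X I) (hz : ContDiffOn ℝ ∞ z I) (hw : ContDiffOn ℝ ∞ w V)
    (hwz : ∀ s ∈ I, w (T s) = X s * z s) (ht : t ∈ I) (hT' : deriv T t ≠ 0) {m : ℕ}
    (hz_flat : ∀ k < m, iteratedDeriv k z t = 0) : ∀ k < m, iteratedDeriv k w (T t) = 0 :=
  iteratedDeriv_flat_of_comp_flat hI hV hT hTV hw ht hT' fun k hk => by
    rw [Set.EqOn.iteratedDeriv_of_isOpen (f := w ∘ T) hwz hI k ht, iteratedDeriv_mul_of_flat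
      (hX.contDiffAt_of_isOpen hI ht k) (hz.contDiffAt_of_isOpen hI ht k) hz_flat,
      Nat.sub_eq_zero_of_le hk, Finset.sum_range_zero]

theorem two_mul_deriv_mul_deriv_eq_of_comp_eq_mul {I V : Set ℝ} {T X z w : ℝ → ℝ} {t : ℝ}
    (hI : IsOpen I) (hV : IsOpen V) (hT : ContDiffOn ℝ ∞ T I) (hTV : MapsTo T I V)
    (hX : ContDiffOn ℝ ∞ X I) (hz : ContDiffOn ℝ ∞ z I) (hw : ContDiffOn ℝ ∞ w V)
    (hwz : ∀ s ∈ I, w (T s) = X s * z s) (ht : t ∈ I) {m : ℕ}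
    (hz_flat : ∀ k < m, iteratedDeriv k z t = 0) (hz_top : iteratedDeriv m z t = 1)
    (hz_succ : iteratedDeriv (m + 1) z t = 0)
    (hw_flat : ∀ k < m, iteratedDeriv k w (T t) = 0)
    (hw_succ : iteratedDeriv (m + 1) w (T t) = 0) :
    2 * deriv X t * deriv T t = m * X t * iteratedDeriv 2 T t := by
  have hcomp (n : ℕ) : iteratedDeriv n (w ∘ T) t = iteratedDeriv n (fun s => X s * z s) t :=
    Set.EqOn.iteratedDeriv_of_isOpen hwz hI n ht
  have hXt := hX.contDiffAt_of_isOpen hI ht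
  have hzt := hz.contDiffAt_of_isOpen hI ht
  have hX_eq : X t = deriv T t ^ m * iteratedDeriv m w (T t) := by
    rw [← iteratedDeriv_comp_of_flat hI hV hT hTV hw ht hw_flat, hcomp,
      iteratedDeriv_mul_of_flat (hXt m) (hzt m) hz_flat]
    simp [hz_top]
  have hX'_eq : (m + 1) * deriv X t = chainCoeff T (m + 1) m t * iteratedDeriv m w (T t) := by
    have h := iteratedDeriv_succ_comp_of_flat hI hV hT hTV hw ht hw_flat
    rw [hcomp, iteratedDeriv_mul_of_flat (hXt (m + 1)) (hzt (m + 1)) hz_flat, hw_succ,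
      show m + 1 + 1 - m = 2 by omega] at h
    simpa [Finset.sum_range_succ, hz_top, hz_succ] using h
  have hT'' : DifferentiableAt ℝ (deriv T) t :=
    ((hT.deriv_of_isOpen hI le_rfl).hasDerivAt_of_isOpen hI ht).differentiableAt
  have hcoeff := chainCoeff.two_mul_succ_self_mul_deriv hT'' m
  have key : ((m : ℝ) + 1) * (2 * deriv X t * deriv T t - m * X t * iteratedDeriv 2 T t) = 0 := by
    linear_combination 2 * deriv T t * hX'_eq + iteratedDeriv m w (T t) * hcoeff -
      (m + 1) * m * iteratedDeriv 2 T t * hX_eq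
  exact sub_eq_zero.1 ((mul_eq_zero.1 key).resolve_left (by positivity))

theorem IsOpen.image_of_contDiffOn_deriv_ne_zero {I : Set ℝ} {T : ℝ → ℝ} (hI : IsOpen I)
    (hT : ContDiffOn ℝ 1 T I) (hT' : ∀ t ∈ I, deriv T t ≠ 0) : IsOpen (T '' I) := by
  rw [isOpen_iff_mem_nhds]
  rintro _ ⟨t, ht, rfl⟩
  rw [← ((hT.contDiffAt (hI.mem_nhds ht)).hasStrictDerivAt one_ne_zero).map_nhds_eq (hT' t ht)]
  exact Filter.image_mem_map (hI.mem_nhds ht)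

theorem FPMapsODE.two_mul_deriv_mul_deriv_eq {r : ℕ} {I : Set ℝ} {a a' : ℕ → ℝ → ℝ}
    {b b' T X₁ X₀ : ℝ → ℝ} (hmaps : FPMapsODE r I a b a' b' T X₁ X₀) (hr : 0 < r)
    (hI : IsOpen I) (hIc : I.OrdConnected) (hT : ContDiffOn ℝ ∞ T I) (hX₁ : ContDiffOn ℝ ∞ X₁ I)
    (hT' : ∀ t ∈ I, deriv T t ≠ 0) (ha : ∀ i, ContDiffOn ℝ ∞ (a i) I) (hb : ContDiffOn ℝ ∞ b I)
    (hrat : ∀ t ∈ I, a (r - 1) t = 0) (hrat' : ∀ s ∈ T '' I, a' (r - 1) s = 0) {t : ℝ}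
    (ht : t ∈ I) : 2 * deriv X₁ t * deriv T t = ((r : ℝ) - 1) * X₁ t * iteratedDeriv 2 T t := by
  have hV : IsOpen (T '' I) :=
    hI.image_of_contDiffOn_deriv_ne_zero (hT.of_le (by exact_mod_cast le_top)) hT'
  obtain ⟨x₁, x₂, hx₁, hx₂, hz_flat, hz_top⟩ := exists_isSolODE_sub_flat hr hI hIc ha hb ht
  obtain ⟨y₁, hy₁, hxy₁⟩ := hmaps x₁ hx₁
  obtain ⟨y₂, hy₂, hxy₂⟩ := hmaps x₂ hx₂
  have hz := hx₁.sub hI hx₂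
  have hw := hy₁.sub hV hy₂
  have hwz (s : ℝ) (hs : s ∈ I) : (y₁ - y₂) (T s) = X₁ s * (x₁ - x₂) s := by
    simp only [Pi.sub_apply, hxy₁ s hs, hxy₂ s hs]
    ring
  have hw_flat := iteratedDeriv_flat_of_comp_eq_mul hI hV hT (mapsTo_image T I) hX₁ hz.1 hw.1
    hwz ht (hT' t ht) hz_flat
  have hr1 : r - 1 + 1 = r := Nat.sub_add_cancel hr
  have h := two_mul_deriv_mul_deriv_eq_of_comp_eq_mul hI hV hT (mapsTo_image T I) hX₁ hz.1
    hw.1 hwz ht hz_flat hz_top (hr1 ▸ hz.iteratedDeriv_eq_zero_of_flat ht (hrat t ht) hz_flat)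
    hw_flat (hr1 ▸ hw.iteratedDeriv_eq_zero_of_flat ⟨t, ht, rfl⟩ (hrat' _ ⟨t, ht, rfl⟩) hw_flat)
  rw [h, Nat.cast_sub hr]
  push_cast
  ring

theorem exists_eq_const_mul_rpow_of_deriv_mul_eq {I : Set ℝ} {X D : ℝ → ℝ} {β : ℝ}
    (hI : IsOpen I) (hIc : IsPreconnected I) (hX : DifferentiableOn ℝ X I)
    (hD : DifferentiableOn ℝ D I) (hDpos : ∀ t ∈ I, 0 < D t)
    (h : ∀ t ∈ I, deriv X t * D t = β * X t * deriv D t) :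
    ∃ C, ∀ t ∈ I, X t = C * D t ^ β := by
  have hderiv (t : ℝ) (ht : t ∈ I) : HasDerivAt (fun s => X s * D s ^ (-β)) 0 t := by
    refine ((hX.differentiableAt (hI.mem_nhds ht)).hasDerivAt.mul
      ((hD.differentiableAt (hI.mem_nhds ht)).hasDerivAt.rpow_const
        (Or.inl (hDpos t ht).ne'))).congr_deriv ?_
    have hpow : D t ^ (-β) = D t ^ (-β - 1) * D t := by
      rw [← Real.rpow_add_one (hDpos t ht).ne', sub_add_cancel]
    rw [hpow]
    linear_combination D t ^ (-β - 1) * h t ht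
  obtain ⟨C, hC⟩ := hI.exists_is_const_of_deriv_eq_zero hIc
    (fun t ht => (hderiv t ht).differentiableAt.differentiableWithinAt)
    (fun t ht => (hderiv t ht).deriv)
  refine ⟨C, fun t ht => ?_⟩
  rw [← hC t ht, mul_assoc, ← Real.rpow_add (hDpos t ht), neg_add_cancel, Real.rpow_zero, mul_one]

theorem stmt7_general (r : ℕ) (hr : 3 ≤ r) (I : Set ℝ) (hI : IsOpenInterval I)
    (a a' : ℕ → ℝ → ℝ) (b b' : ℝ → ℝ)
    (T X₁ X₀ : ℝ → ℝ)
    (hT : ContDiffOn ℝ (⊤ : ℕ∞) T I) (hX₁ : ContDiffOn ℝ (⊤ : ℕ∞) X₁ I)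
    (hTX : ∀ t ∈ I, deriv T t * X₁ t ≠ 0)
    (ha : ∀ i, ContDiffOn ℝ (⊤ : ℕ∞) (a i) I) (hb : ContDiffOn ℝ (⊤ : ℕ∞) b I)
    (hrat : ∀ t ∈ I, a (r - 1) t = 0)
    (hrat' : ∀ s ∈ T '' I, a' (r - 1) s = 0)
    (hmaps : FPMapsODE r I a b a' b' T X₁ X₀) :
    (∀ t ∈ I, 2 * deriv X₁ t * deriv T t = ((r : ℝ) - 1) * X₁ t * iteratedDeriv 2 T t) ∧
    ((∀ t ∈ I, 0 < deriv T t) →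
      ∃ C : ℝ, C ≠ 0 ∧ ∀ t ∈ I, X₁ t = C * deriv T t ^ (((r : ℝ) - 1) / 2)) := by
  obtain ⟨hIo, hIc, t₀, ht₀⟩ := hI
  have key (t : ℝ) (ht : t ∈ I) :=
    hmaps.two_mul_deriv_mul_deriv_eq (by omega) hIo hIc hT hX₁
      (fun t ht => left_ne_zero_of_mul (hTX t ht)) ha hb hrat hrat' ht
  refine ⟨key, fun hpos => ?_⟩
  obtain ⟨C, hC⟩ := exists_eq_const_mul_rpow_of_deriv_mul_eq (β := ((r : ℝ) - 1) / 2) hIo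
    hIc.isPreconnected (hX₁.differentiableOn (by simp))
    ((hT.deriv_of_isOpen hIo (m := ∞) le_rfl).differentiableOn (by simp)) hpos fun t ht => by
      have h := key t ht
      rw [iteratedDeriv_succ, iteratedDeriv_one] at h
      linear_combination h / 2
  exact ⟨C, fun hC0 => right_ne_zero_of_mul (hTX t₀ ht₀) (by simp [hC t₀ ht₀, hC0]), hC⟩

/-- if a fiber-preserving transformation `t̃ = T(t)`, `x̃ = X₁(t)x + X₀(t)`
maps an `r`-th order (`r ≥ 3`) linear ODE in rational form to another one in rational
form, then `2X₁'T' = (r−1)X₁T''`; in particular, if `T' > 0` then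
`X₁ = C (T')^((r−1)/2)` for some nonzero constant `C`. -/
theorem stmt7 (r : ℕ) (hr : 3 ≤ r) (I : Set ℝ) (hI : IsOpenInterval I)
    (a a' : ℕ → ℝ → ℝ) (b b' : ℝ → ℝ)
    (T X₁ X₀ : ℝ → ℝ)
    (hT : ContDiffOn ℝ (⊤ : ℕ∞) T I) (hX₁ : ContDiffOn ℝ (⊤ : ℕ∞) X₁ I) (hX₀ : ContDiffOn ℝ (⊤ : ℕ∞) X₀ I)
    (hTX : ∀ t ∈ I, deriv T t * X₁ t ≠ 0)
    (ha : ∀ i, ContDiffOn ℝ (⊤ : ℕ∞) (a i) I) (hb : ContDiffOn ℝ (⊤ : ℕ∞) b I)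
    (ha' : ∀ i, ContDiffOn ℝ (⊤ : ℕ∞) (a' i) (T '' I)) (hb' : ContDiffOn ℝ (⊤ : ℕ∞) b' (T '' I))
    (hrat : ∀ t ∈ I, a (r - 1) t = 0)
    (hrat' : ∀ s ∈ T '' I, a' (r - 1) s = 0)
    (hmaps : FPMapsODE r I a b a' b' T X₁ X₀) :
    (∀ t ∈ I, 2 * deriv X₁ t * deriv T t = ((r : ℝ) - 1) * X₁ t * iteratedDeriv 2 T t) ∧
    ((∀ t ∈ I, 0 < deriv T t) →
      ∃ C : ℝ, C ≠ 0 ∧ ∀ t ∈ I, X₁ t = C * deriv T t ^ (((r : ℝ) - 1) / 2)) :=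
  stmt7_general r hr I hI a a' b b' T X₁ X₀ hT hX₁ hTX ha hb hrat hrat' hmaps
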